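/- arXiv:2601.23054 — 4 statements merged into one kernel-verified Lean document; each statement's English description precedes it below -/
import Mathlib

section
/- The map ℓ : H → ℝ/ℤ sending f to n_1(f)·α_1 + … + n_s(f)·α_s (mod 1), where (n_i(f)) is the unique integer tuple with f(x) − x − Σ n_i(f)α_i ∈ { p/q mod 1 : p ∈ ℤ } for all x, is a group homomorphism; ℓ(R_a) = a for every a ∈ A; the image of ℓ is exactly A; and every f ∈ H can be written as f = P ∘ R_{ℓ(f)} and also as f = R_{ℓ(f)} ∘ P' with P, P' ∈ ker ℓ. -/
open Equiv

noncomputable section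

/-- The circle `ℝ/ℤ`. -/
abbrev Circ : Type := AddCircle (1 : ℝ)

/-- Rotation by `a` : the bijection `x ↦ x + a` of the circle. -/
def Rot (a : Circ) : Equiv.Perm Circ := Equiv.addRight a

/-- The subgroup `{ p/q mod 1 : p ∈ ℤ }` of the circle. -/
def RatPts (q : ℕ) : AddSubgroup Circ :=
  AddSubgroup.zmultiples (((q : ℝ)⁻¹ : ℝ) : Circ)

/-- The group of bijections of the circle all of whose displacements lie in `RatPts q`. -/
def Delta (q : ℕ) : Subgroup (Equiv.Perm Circ) where
  carrier := {f | ∀ x : Circ, f x - x ∈ RatPts q}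
  one_mem' := by intro x; simpa using zero_mem (RatPts q)
  mul_mem' := by
    intro f g hf hg x
    have h1 : f (g x) - g x ∈ RatPts q := hf (g x)
    have h2 : g x - x ∈ RatPts q := hg x
    have h3 := add_mem h1 h2
    simpa [Equiv.Perm.mul_apply, sub_add_sub_cancel] using h3
  inv_mem' := by
    intro f hf x
    have h1 : f (f⁻¹ x) - f⁻¹ x ∈ RatPts q := hf (f⁻¹ x)
    rw [show f (f⁻¹ x) = x from f.apply_symm_apply x] at h1
    simpa using neg_mem h1

/-- The subgroup `A` of the circle generated by the classes of `α₁, …, α_s`. -/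
def Agrp (s : ℕ) (α : Fin s → ℝ) : AddSubgroup Circ :=
  AddSubgroup.closure (Set.range fun i => ((α i : ℝ) : Circ))

/-- The group `H` generated by the rotations `R_{αᵢ}` and the maps `E_{τⱼ}`. -/
def Hgrp (s m q : ℕ) (α : Fin s → ℝ) (τs : Fin m → Equiv.Perm (Fin q))
    (E : Equiv.Perm (Fin q) → Equiv.Perm Circ) : Subgroup (Equiv.Perm Circ) :=
  Subgroup.closure ((Set.range fun i => Rot ((α i : ℝ) : Circ)) ∪ (Set.range fun j => E (τs j)))

/-- The group `Q` generated by the maps `E_{τⱼ}`. -/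
def Qgrp (m q : ℕ) (τs : Fin m → Equiv.Perm (Fin q))
    (E : Equiv.Perm (Fin q) → Equiv.Perm Circ) : Subgroup (Equiv.Perm Circ) :=
  Subgroup.closure (Set.range fun j => E (τs j))

/-- The subgroup `𝔖(Q)` of `S_q` generated by `τ₁, …, τ_m`. -/
def SQgrp (m q : ℕ) (τs : Fin m → Equiv.Perm (Fin q)) : Subgroup (Equiv.Perm (Fin q)) :=
  Subgroup.closure (Set.range τs)

/-- The subgroup `W = ⟨σ, τ₁, …, τ_m⟩` of `S_q`, where `σ` is the `q`-cycle. -/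
def Wgrp (m q : ℕ) (τs : Fin m → Equiv.Perm (Fin q)) : Subgroup (Equiv.Perm (Fin q)) :=
  Subgroup.closure ({finRotate q} ∪ Set.range τs)


/-!
Because `1, α₁, …, α_s` are linearly independent over `ℚ`, the subgroup `A` meets the `q`-torsion
`RatPts q` of the circle trivially. Hence an element `a ∈ A` with `f x - x - a ∈ RatPts q` for all
`x` is unique. Displacements add under composition and `R_a` has displacement `a`, so by this
uniqueness `ℓ` is a homomorphism that is the identity on rotations, and
`f = (f ∘ R_{-ℓ f}) ∘ R_{ℓ f} = R_{ℓ f} ∘ (R_{-ℓ f} ∘ f)` are the required decompositions.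
-/

lemma mem_agrp_iff {s : ℕ} {α : Fin s → ℝ} {a : Circ} :
    a ∈ Agrp s α ↔ ∃ n : Fin s → ℤ, ∑ i, n i • ((α i : ℝ) : Circ) = a := by
  rw [Agrp, ← SetLike.mem_coe, ← AddSubgroup.coe_toIntSubmodule,
    AddSubgroup.toIntSubmodule_closure, SetLike.mem_coe, Submodule.mem_span_range_iff_exists_fun]

lemma disjoint_agrp_ratPts {s : ℕ} {α : Fin s → ℝ}
    (hα : LinearIndependent ℚ (Fin.cons (1 : ℝ) α)) (q : ℕ) :
    Disjoint (Agrp s α) (RatPts q) := by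
  rw [AddSubgroup.disjoint_def]
  rintro _ hA hR
  obtain ⟨n, rfl⟩ := mem_agrp_iff.mp hA
  obtain ⟨p, hp⟩ := AddSubgroup.mem_zmultiples_iff.mp hR
  have hlift : ((p • (q : ℝ)⁻¹ - ∑ i, n i • α i : ℝ) : Circ) = 0 := by
    rw [AddCircle.coe_sub, sub_eq_zero, AddCircle.coe_zsmul, hp]
    exact (map_sum (QuotientAddGroup.mk' (AddSubgroup.zmultiples (1 : ℝ)))
      (fun i => n i • α i) Finset.univ).symm
  obtain ⟨k, hk⟩ := (AddCircle.coe_eq_zero_iff 1).mp hlift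
  have hrel := Fintype.linearIndependent_iff.mp hα
    (Fin.cons ((p : ℚ) / q - k) fun i => -(n i : ℚ)) (by
      rw [Fin.sum_univ_succ]
      simp only [Fin.cons_zero, Fin.cons_succ, Rat.smul_def, zsmul_eq_mul] at hk ⊢
      push_cast
      simp only [neg_mul, Finset.sum_neg_distrib, div_eq_mul_inv]
      linarith)
  have hn : n = 0 := funext fun i => by simpa using hrel i.succ
  simp [hn]

/-- `f` agrees with the rotation `R_a` up to displacements in `RatPts q`. -/
def IsRotMod (q : ℕ) (f : Perm Circ) (a : Circ) : Prop :=
  ∀ x, f x - x - a ∈ RatPts q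

section IsRotMod

variable {q : ℕ} {f g : Perm Circ} {a b : Circ}

lemma isRotMod_rot (q : ℕ) (a : Circ) : IsRotMod q (Rot a) a := fun x => by
  simp [Rot]

lemma IsRotMod.mul (hf : IsRotMod q f a) (hg : IsRotMod q g b) :
    IsRotMod q (f * g) (a + b) := fun x => by
  have h := add_mem (hf (g x)) (hg x)
  rwa [show f (g x) - g x - a + (g x - x - b) = (f * g) x - x - (a + b) by
    rw [Perm.mul_apply]; abel] at h

lemma IsRotMod.sub_mem_ratPts (ha : IsRotMod q f a) (hb : IsRotMod q f b) :
    a - b ∈ RatPts q := by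
  simpa using sub_mem (hb 0) (ha 0)

lemma IsRotMod.unique {s : ℕ} {α : Fin s → ℝ} (hα : LinearIndependent ℚ (Fin.cons (1 : ℝ) α))
    (ha : IsRotMod q f a) (hb : IsRotMod q f b) (haA : a ∈ Agrp s α) (hbA : b ∈ Agrp s α) :
    a = b :=
  sub_eq_zero.mp <|
    (AddSubgroup.disjoint_def.mp (disjoint_agrp_ratPts hα q)) (sub_mem haA hbA)
      (ha.sub_mem_ratPts hb)

end IsRotMod

lemma rot_mem_hgrp {s m q : ℕ} {α : Fin s → ℝ} {τs : Fin m → Perm (Fin q)}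
    {E : Perm (Fin q) → Perm Circ} {a : Circ} (ha : a ∈ Agrp s α) :
    Rot a ∈ Hgrp s m q α τs E := by
  induction ha using AddSubgroup.closure_induction with
  | mem x hx =>
    obtain ⟨i, rfl⟩ := hx
    exact Subgroup.subset_closure (Or.inl ⟨i, rfl⟩)
  | zero => simp [Rot, one_mem]
  | add x y _ _ hx hy => simpa [Rot] using mul_mem hy hx
  | neg x _ hx => simpa [Rot] using inv_mem hx

lemma rot_neg_mul_rot (a : Circ) : Rot (-a) * Rot a = 1 := by
  rw [Rot, Rot, ← Equiv.addRight_add, add_neg_cancel, Equiv.addRight_zero]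

lemma rot_mul_rot_neg (a : Circ) : Rot a * Rot (-a) = 1 := by
  simpa using rot_neg_mul_rot (-a)

theorem stmt_1_general
    (s m q : ℕ)
    (α : Fin s → ℝ) (hα : LinearIndependent ℚ (Fin.cons (1 : ℝ) α))
    (τs : Fin m → Equiv.Perm (Fin q))
    (E : Equiv.Perm (Fin q) → Equiv.Perm Circ)
    (ℓ : ↥(Hgrp s m q α τs E) → Circ)
    (hℓ : ∀ f : ↥(Hgrp s m q α τs E),
      (∃ n : Fin s → ℤ, ℓ f = ∑ i, n i • ((α i : ℝ) : Circ)) ∧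
      ∀ x : Circ, (f : Equiv.Perm Circ) x - x - ℓ f ∈ RatPts q) :
    (∀ f g : ↥(Hgrp s m q α τs E), ℓ (f * g) = ℓ f + ℓ g) ∧
    (∀ (a : Circ), a ∈ Agrp s α → ∀ (hmem : Rot a ∈ Hgrp s m q α τs E), ℓ ⟨Rot a, hmem⟩ = a) ∧
    Set.range ℓ = (Agrp s α : Set Circ) ∧
    (∀ f : ↥(Hgrp s m q α τs E), ∃ P P' : ↥(Hgrp s m q α τs E),
      ℓ P = 0 ∧ ℓ P' = 0 ∧
      (f : Equiv.Perm Circ) = (P : Equiv.Perm Circ) * Rot (ℓ f) ∧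
      (f : Equiv.Perm Circ) = Rot (ℓ f) * (P' : Equiv.Perm Circ)) := by
  have hA (f) : ℓ f ∈ Agrp s α :=
    mem_agrp_iff.mpr <| (hℓ f).1.imp fun _ hn => hn.symm
  have hunique (f : ↥(Hgrp s m q α τs E)) (a : Circ) (ha : IsRotMod q f a) (haA : a ∈ Agrp s α) :
      ℓ f = a :=
    IsRotMod.unique hα (hℓ f).2 ha (hA f) haA
  have hom (f g) : ℓ (f * g) = ℓ f + ℓ g :=
    hunique _ _ (IsRotMod.mul (hℓ f).2 (hℓ g).2) (add_mem (hA f) (hA g))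
  have hrot (a : Circ) (ha : a ∈ Agrp s α) (hmem) : ℓ ⟨Rot a, hmem⟩ = a :=
    hunique _ _ (isRotMod_rot q a) ha
  refine ⟨hom, hrot, Set.ext fun a => ⟨?_, fun ha => ⟨⟨Rot a, rot_mem_hgrp ha⟩, hrot a ha _⟩⟩,
    fun f => ?_⟩
  · rintro ⟨f, rfl⟩
    exact hA f
  · let r : ↥(Hgrp s m q α τs E) := ⟨Rot (-ℓ f), rot_mem_hgrp (neg_mem (hA f))⟩
    have hr : ℓ r = -ℓ f := hrot _ (neg_mem (hA f)) _
    refine ⟨f * r, r * f, by rw [hom, hr, add_neg_cancel], by rw [hom, hr, neg_add_cancel], ?_, ?_⟩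
    · rw [Subgroup.coe_mul, mul_assoc, rot_neg_mul_rot, mul_one]
    · rw [Subgroup.coe_mul, ← mul_assoc, rot_mul_rot_neg, one_mul]

theorem stmt_1
    (s m q : ℕ) (hs : 1 ≤ s) (hm : 1 ≤ m) (hq : 2 ≤ q)
    (α : Fin s → ℝ) (hα : LinearIndependent ℚ (Fin.cons (1 : ℝ) α))
    (τs : Fin m → Equiv.Perm (Fin q))
    (E : Equiv.Perm (Fin q) → Equiv.Perm Circ)
    (hE : ∀ (τ : Equiv.Perm (Fin q)) (i : Fin q) (t : ℝ), 0 ≤ t → t < 1 / q →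
      E τ ((((i : ℕ) : ℝ) / q + t : ℝ) : Circ) = ((((τ i : ℕ) : ℝ) / q + t : ℝ) : Circ))
    (ℓ : ↥(Hgrp s m q α τs E) → Circ)
    (hℓ : ∀ f : ↥(Hgrp s m q α τs E),
      (∃ n : Fin s → ℤ, ℓ f = ∑ i, n i • ((α i : ℝ) : Circ)) ∧
      ∀ x : Circ, (f : Equiv.Perm Circ) x - x - ℓ f ∈ RatPts q) :
    (∀ f g : ↥(Hgrp s m q α τs E), ℓ (f * g) = ℓ f + ℓ g) ∧
    (∀ (a : Circ), a ∈ Agrp s α → ∀ (hmem : Rot a ∈ Hgrp s m q α τs E), ℓ ⟨Rot a, hmem⟩ = a) ∧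
    Set.range ℓ = (Agrp s α : Set Circ) ∧
    (∀ f : ↥(Hgrp s m q α τs E), ∃ P P' : ↥(Hgrp s m q α τs E),
      ℓ P = 0 ∧ ℓ P' = 0 ∧
      (f : Equiv.Perm Circ) = (P : Equiv.Perm Circ) * Rot (ℓ f) ∧
      (f : Equiv.Perm Circ) = Rot (ℓ f) * (P' : Equiv.Perm Circ)) :=
  stmt_1_general s m q α hα τs E ℓ hℓ
end
end

section
/- The group K is generated by the set { R_a ∘ g ∘ R_a⁻¹ : a ∈ A, g ∈ Q }, where R_a is the rotation by a. -/
open Equiv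

noncomputable section

/-!
Let `R` be the group of rotations by elements of `A`, and `N` the subgroup generated by the
`R`-conjugates of `Q`. Since `R` normalizes `N`, `H = R ⊔ Q = R ⊔ N = R * N`. Every element of
`N` moves each point by a multiple of `1/q`, while a rotation `R_a` with `a ∈ A` does so only if
`a = 0`: an integer combination of the `αᵢ` that is rational mod `1` is trivial by the
`ℚ`-linear independence of `1, α₁, …, α_s`. So `r * n ∈ K` forces `r = 1`, i.e. `K = N`.
-/

namespace Subgroup

open scoped Pointwise

variable {G : Type*} [Group G]

def conjClosure (R Q : Subgroup G) : Subgroup G :=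
  closure {f | ∃ r ∈ R, ∃ g ∈ Q, f = r * g * r⁻¹}

variable {R Q L K : Subgroup G}

lemma le_conjClosure : Q ≤ conjClosure R Q := fun g hg =>
  subset_closure ⟨1, one_mem R, g, hg, by group⟩

lemma conjClosure_le (hR : R ≤ normalizer (L : Set G)) (hQ : Q ≤ L) : conjClosure R Q ≤ L := by
  rw [conjClosure, closure_le]
  rintro _ ⟨r, hr, g, hg, rfl⟩
  exact le_normalizer_iff.mp hR r hr g (hQ hg)

lemma le_normalizer_conjClosure : R ≤ normalizer (conjClosure R Q : Set G) := by
  rw [conjClosure, le_normalizer_closure_iff]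
  rintro h hh _ ⟨r, hr, g, hg, rfl⟩
  exact subset_closure ⟨h * r, mul_mem hh hr, g, hg, by group⟩

lemma conjClosure_le_sup : conjClosure R Q ≤ R ⊔ Q :=
  conjClosure_le (le_sup_left.trans le_normalizer) le_sup_right

lemma sup_conjClosure : R ⊔ conjClosure R Q = R ⊔ Q :=
  le_antisymm (sup_le le_sup_left conjClosure_le_sup) (sup_le_sup_left le_conjClosure R)

theorem sup_inf_eq_conjClosure (hRK : R ⊓ K = ⊥) (hR : R ≤ normalizer (K : Set G)) (hQ : Q ≤ K) :
    (R ⊔ Q) ⊓ K = conjClosure R Q := by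
  have hN : conjClosure R Q ≤ K := conjClosure_le hR hQ
  refine le_antisymm ?_ (le_inf conjClosure_le_sup hN)
  intro x hx
  obtain ⟨hx, hxK⟩ := mem_inf.mp hx
  obtain ⟨r, hr, n, hn, rfl⟩ : x ∈ (R : Set G) * conjClosure R Q := by
    rw [← coe_mul_of_left_le_normalizer_right _ _ le_normalizer_conjClosure, sup_conjClosure]
    exact hx
  have hrK : r ∈ K := by simpa using mul_mem hxK (inv_mem (hN hn))
  obtain rfl : r = 1 := by simpa [hRK] using mem_inf.mpr ⟨hr, hrK⟩
  simpa using hn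

end Subgroup

lemma rot_apply (a x : Circ) : Rot a x = x + a := rfl

lemma rot_inv_apply (a x : Circ) : (Rot a)⁻¹ x = x - a := by
  simp [Rot, Equiv.Perm.inv_def, sub_eq_add_neg]

def rotHom : Multiplicative Circ →* Perm Circ where
  toFun a := Rot a.toAdd
  map_one' := by ext x; simp [rot_apply]
  map_mul' a b := by
    ext x
    simp only [toAdd_mul, Perm.mul_apply, rot_apply]
    abel

def rotations (A : AddSubgroup Circ) : Subgroup (Perm Circ) :=
  A.toSubgroup.map rotHom

lemma mem_rotations {A : AddSubgroup Circ} {f : Perm Circ} :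
    f ∈ rotations A ↔ ∃ a ∈ A, Rot a = f := by
  simp [rotations, rotHom]

lemma rotations_closure (S : Set Circ) :
    rotations (AddSubgroup.closure S) = Subgroup.closure (Rot '' S) := by
  rw [rotations, AddSubgroup.toSubgroup_closure, MonoidHom.map_closure]
  rfl

lemma rotations_le_normalizer_delta (A : AddSubgroup Circ) (q : ℕ) :
    rotations A ≤ Subgroup.normalizer (Delta q : Set (Perm Circ)) := by
  rw [Subgroup.le_normalizer_iff]
  rintro _ hr g hg x
  obtain ⟨a, -, rfl⟩ := mem_rotations.mp hr
  have hx : (Rot a * g * (Rot a)⁻¹) x - x = g (x - a) - (x - a) := by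
    simp only [Perm.mul_apply, rot_inv_apply, rot_apply]
    abel
  show (Rot a * g * (Rot a)⁻¹) x - x ∈ RatPts q
  rw [hx]
  exact hg (x - a)

lemma rot_mem_delta_iff {a : Circ} {q : ℕ} : Rot a ∈ Delta q ↔ a ∈ RatPts q :=
  ⟨fun h => by simpa [rot_apply] using h 0, fun h x => by simpa [rot_apply] using h⟩

lemma exists_eq_coe_div_add {q : ℕ} (hq : 0 < q) (x : Circ) :
    ∃ (i : Fin q) (t : ℝ), 0 ≤ t ∧ t < 1 / q ∧ x = ((((i : ℕ) : ℝ) / q + t : ℝ) : Circ) := by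
  obtain ⟨r, rfl⟩ := QuotientAddGroup.mk_surjective x
  set y := Int.fract r
  have hq' : (0 : ℝ) < q := by exact_mod_cast hq
  have hyq : 0 ≤ y * q := mul_nonneg (Int.fract_nonneg r) hq'.le
  have hi : ⌊y * q⌋₊ < q := by
    rw [Nat.floor_lt hyq]
    exact mul_lt_of_lt_one_left hq' (Int.fract_lt_one r)
  refine ⟨⟨⌊y * q⌋₊, hi⟩, y - ⌊y * q⌋₊ / q, ?_, ?_, ?_⟩
  · rw [sub_nonneg, div_le_iff₀ hq']
    exact Nat.floor_le hyq
  · rw [sub_lt_iff_lt_add, ← add_div, lt_div_iff₀ hq', add_comm]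
    exact Nat.lt_floor_add_one _
  · rw [add_sub_cancel, AddCircle.coe_fract]

lemma mem_delta_of_permutes_intervals {q : ℕ} (hq : 0 < q) {τ : Perm (Fin q)} {e : Perm Circ}
    (he : ∀ (i : Fin q) (t : ℝ), 0 ≤ t → t < 1 / q →
      e ((((i : ℕ) : ℝ) / q + t : ℝ) : Circ) = ((((τ i : ℕ) : ℝ) / q + t : ℝ) : Circ)) :
    e ∈ Delta q := by
  intro x
  obtain ⟨i, t, ht0, ht1, rfl⟩ := exists_eq_coe_div_add hq x
  refine AddSubgroup.mem_zmultiples_iff.mpr ⟨(τ i : ℤ) - (i : ℤ), ?_⟩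
  rw [he i t ht0 ht1, ← QuotientAddGroup.mk_sub, ← QuotientAddGroup.mk_zsmul]
  congr 1
  simp only [zsmul_eq_mul, Int.cast_sub, Int.cast_natCast]
  ring

lemma qgrp_le_delta {m q : ℕ} (hq : 0 < q) (τs : Fin m → Perm (Fin q))
    {E : Perm (Fin q) → Perm Circ}
    (hE : ∀ (τ : Perm (Fin q)) (i : Fin q) (t : ℝ), 0 ≤ t → t < 1 / q →
      E τ ((((i : ℕ) : ℝ) / q + t : ℝ) : Circ) = ((((τ i : ℕ) : ℝ) / q + t : ℝ) : Circ)) :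
    Qgrp m q τs E ≤ Delta q := by
  rw [Qgrp, Subgroup.closure_le]
  rintro _ ⟨j, rfl⟩
  exact mem_delta_of_permutes_intervals hq (hE (τs j))

lemma eq_zero_of_sum_zsmul_eq_ratCast {s : ℕ} {α : Fin s → ℝ}
    (hα : LinearIndependent ℚ (Fin.cons (1 : ℝ) α)) {n : Fin s → ℤ} {c : ℚ}
    (h : ∑ i, n i • α i = c) : n = 0 := by
  have hrel := Fintype.linearIndependent_iff.mp hα (Fin.cons (-c) fun i => (n i : ℚ)) (by
    simp [Fin.sum_univ_succ, Rat.smul_def, ← h])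
  funext i
  simpa using hrel i.succ

lemma eq_zero_of_mem_agrp_of_mem_ratPts {s q : ℕ} {α : Fin s → ℝ}
    (hα : LinearIndependent ℚ (Fin.cons (1 : ℝ) α)) {a : Circ}
    (hA : a ∈ Agrp s α) (hR : a ∈ RatPts q) : a = 0 := by
  obtain ⟨n, rfl⟩ := AddSubgroup.mem_closure_range_iff_of_fintype.mp hA
  obtain ⟨k, hk⟩ := AddSubgroup.mem_zmultiples_iff.mp hR
  have hsum : ∑ i, n i • ((α i : ℝ) : Circ) = ((∑ i, n i • α i : ℝ) : Circ) := by simp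
  rw [hsum, ← QuotientAddGroup.mk_zsmul, eq_comm, ← sub_eq_zero,
    ← QuotientAddGroup.mk_sub, AddCircle.coe_eq_zero_iff] at hk
  obtain ⟨z, hz⟩ := hk
  rw [zsmul_eq_mul, zsmul_eq_mul, mul_one] at hz
  obtain rfl : n = 0 := eq_zero_of_sum_zsmul_eq_ratCast hα (c := k / q + z) (by
    push_cast
    rw [div_eq_mul_inv]
    linarith)
  simp

lemma rotations_agrp_inf_delta {s q : ℕ} {α : Fin s → ℝ}
    (hα : LinearIndependent ℚ (Fin.cons (1 : ℝ) α)) :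
    rotations (Agrp s α) ⊓ Delta q = ⊥ := by
  refine eq_bot_iff.mpr fun f hf => ?_
  obtain ⟨hA, hΔ⟩ := Subgroup.mem_inf.mp hf
  obtain ⟨a, ha, rfl⟩ := mem_rotations.mp hA
  rw [eq_zero_of_mem_agrp_of_mem_ratPts hα ha (rot_mem_delta_iff.mp hΔ)]
  exact Subgroup.mem_bot.mpr (map_one rotHom)

lemma hgrp_eq_sup {s m q : ℕ} (α : Fin s → ℝ) (τs : Fin m → Perm (Fin q))
    (E : Perm (Fin q) → Perm Circ) :
    Hgrp s m q α τs E = rotations (Agrp s α) ⊔ Qgrp m q τs E := by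
  rw [Hgrp, Subgroup.closure_union, Agrp, rotations_closure, ← Set.range_comp]
  rfl

theorem stmt_4_general
    (s m q : ℕ) (hq : 2 ≤ q)
    (α : Fin s → ℝ) (hα : LinearIndependent ℚ (Fin.cons (1 : ℝ) α))
    (τs : Fin m → Equiv.Perm (Fin q))
    (E : Equiv.Perm (Fin q) → Equiv.Perm Circ)
    (hE : ∀ (τ : Equiv.Perm (Fin q)) (i : Fin q) (t : ℝ), 0 ≤ t → t < 1 / q →
      E τ ((((i : ℕ) : ℝ) / q + t : ℝ) : Circ) = ((((τ i : ℕ) : ℝ) / q + t : ℝ) : Circ))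
    (K : Subgroup (Equiv.Perm Circ)) (hK : K = Hgrp s m q α τs E ⊓ Delta q) :
    Subgroup.closure
      {f : Equiv.Perm Circ | ∃ a ∈ Agrp s α, ∃ g ∈ Qgrp m q τs E, f = Rot a * g * (Rot a)⁻¹} = K := by
  have hset : {f : Perm Circ | ∃ a ∈ Agrp s α, ∃ g ∈ Qgrp m q τs E, f = Rot a * g * (Rot a)⁻¹} =
      {f | ∃ r ∈ rotations (Agrp s α), ∃ g ∈ Qgrp m q τs E, f = r * g * r⁻¹} := by
    ext f
    simp [mem_rotations]
  rw [hK, hgrp_eq_sup, Subgroup.sup_inf_eq_conjClosure (rotations_agrp_inf_delta hα)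
    (rotations_le_normalizer_delta _ q) (qgrp_le_delta (by omega) τs hE), Subgroup.conjClosure,
    hset]

theorem stmt_4
    (s m q : ℕ) (hs : 1 ≤ s) (hm : 1 ≤ m) (hq : 2 ≤ q)
    (α : Fin s → ℝ) (hα : LinearIndependent ℚ (Fin.cons (1 : ℝ) α))
    (τs : Fin m → Equiv.Perm (Fin q))
    (E : Equiv.Perm (Fin q) → Equiv.Perm Circ)
    (hE : ∀ (τ : Equiv.Perm (Fin q)) (i : Fin q) (t : ℝ), 0 ≤ t → t < 1 / q →
      E τ ((((i : ℕ) : ℝ) / q + t : ℝ) : Circ) = ((((τ i : ℕ) : ℝ) / q + t : ℝ) : Circ))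
    (K : Subgroup (Equiv.Perm Circ)) (hK : K = Hgrp s m q α τs E ⊓ Delta q) :
    Subgroup.closure
      {f : Equiv.Perm Circ | ∃ a ∈ Agrp s α, ∃ g ∈ Qgrp m q τs E, f = Rot a * g * (Rot a)⁻¹} = K :=
  stmt_4_general s m q hq α hα τs E hE K hK
end
end

section
/- For every x ∈ [0,1/q) and every f ∈ K there exists a unique permutation ω of {1,…,q} such that f(x + (i−1)/q) = x + (ω(i)−1)/q in ℝ/ℤ for all i ∈ {1,…,q}; writing ω_x(f) for this permutation, the map f ↦ ω_x(f) is a group homomorphism from K to the symmetric group S_q, and ω_x(E_τ) = τ for every τ ∈ 𝔖(Q). -/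
open Equiv

noncomputable section

/-!
The points `x + i/q` (`i < q`) form the coset `x + RatPts q` of the circle, and `i ↦ x + i/q` is
a bijection from `Fin q` onto it: it is `x` plus the embedding `ZMod q ↪ ℝ/ℤ`, `j ↦ j/q`.
An element of `Delta q` moves every point within its `RatPts q`-coset, so it permutes this
coset; the induced permutation of `Fin q` is unique by injectivity, which makes `f ↦ ω_x(f)`
multiplicative.
-/

def fiberPt (q : ℕ) (x : ℝ) (i : Fin q) : Circ := ((x + ((i : ℕ) : ℝ) / q : ℝ) : Circ)

def IsFiberPerm (q : ℕ) (x : ℝ) (f : Perm Circ) (ω : Perm (Fin q)) : Prop :=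
  ∀ i, f (fiberPt q x i) = fiberPt q x (ω i)

theorem fiberPt_sub_mem_ratPts {q : ℕ} (x : ℝ) (i : Fin q) : fiberPt q x i - x ∈ RatPts q := by
  refine AddSubgroup.mem_zmultiples_iff.mpr ⟨(i : ℕ), ?_⟩
  rw [fiberPt, ← AddCircle.coe_sub, add_sub_cancel_left, ← AddCircle.coe_zsmul, zsmul_eq_mul,
    Int.cast_natCast, div_eq_mul_inv]

theorem IsFiberPerm.mul {q : ℕ} {x : ℝ} {f g : Perm Circ} {ω ω' : Perm (Fin q)}
    (hf : IsFiberPerm q x f ω) (hg : IsFiberPerm q x g ω') : IsFiberPerm q x (f * g) (ω * ω') :=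
  fun i => by rw [Perm.mul_apply, hg i, hf, Perm.mul_apply]

section

variable {q : ℕ} [NeZero q] (x : ℝ)

theorem fiberPt_eq_add_toAddCircle (i : Fin q) :
    fiberPt q x i = (x : Circ) + ZMod.toAddCircle ((i : ℕ) : ZMod q) := by
  rw [fiberPt, AddCircle.coe_add, ZMod.toAddCircle_natCast]

theorem fiberPt_injective : Function.Injective (fiberPt q x) := by
  intro i j hij
  rw [fiberPt_eq_add_toAddCircle, fiberPt_eq_add_toAddCircle, add_right_inj,
    ZMod.toAddCircle_inj] at hij
  have hval := congrArg ZMod.val hij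
  rwa [ZMod.val_cast_of_lt i.isLt, ZMod.val_cast_of_lt j.isLt, Fin.val_inj] at hval

theorem exists_fiberPt_eq_of_sub_mem_ratPts {y : Circ} (hy : y - x ∈ RatPts q) :
    ∃ i, fiberPt q x i = y := by
  obtain ⟨k, hk⟩ := AddSubgroup.mem_zmultiples_iff.mp hy
  have hk' : ZMod.toAddCircle (k : ZMod q) = y - x := by
    rw [← hk, ZMod.toAddCircle_intCast, ← AddCircle.coe_zsmul, zsmul_eq_mul, div_eq_mul_inv]
  refine ⟨⟨(k : ZMod q).val, ZMod.val_lt _⟩, ?_⟩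
  rw [fiberPt_eq_add_toAddCircle, ZMod.natCast_zmod_val, hk', add_sub_cancel]

theorem exists_isFiberPerm_of_mem_delta {f : Perm Circ} (hf : f ∈ Delta q) :
    ∃ ω, IsFiberPerm q x f ω := by
  have hmaps (i : Fin q) : ∃ j, fiberPt q x j = f (fiberPt q x i) := by
    apply exists_fiberPt_eq_of_sub_mem_ratPts
    rw [← sub_add_sub_cancel _ (fiberPt q x i)]
    exact add_mem (hf _) (fiberPt_sub_mem_ratPts x i)
  choose g hg using hmaps
  have hg_inj : Function.Injective g := fun i j hij =>
    fiberPt_injective x (f.injective (by rw [← hg, ← hg, hij]))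
  exact ⟨ofBijective g (Finite.injective_iff_bijective.mp hg_inj), fun i => (hg i).symm⟩

variable {x}

theorem IsFiberPerm.unique {f : Perm Circ} {ω ω' : Perm (Fin q)} (h : IsFiberPerm q x f ω)
    (h' : IsFiberPerm q x f ω') : ω = ω' :=
  Equiv.ext fun i => fiberPt_injective x ((h i).symm.trans (h' i))

end

theorem stmt_6_general
    (s m q : ℕ) (hq : 2 ≤ q)
    (α : Fin s → ℝ)
    (τs : Fin m → Equiv.Perm (Fin q))
    (E : Equiv.Perm (Fin q) → Equiv.Perm Circ)
    (hE : ∀ (τ : Equiv.Perm (Fin q)) (i : Fin q) (t : ℝ), 0 ≤ t → t < 1 / q →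
      E τ ((((i : ℕ) : ℝ) / q + t : ℝ) : Circ) = ((((τ i : ℕ) : ℝ) / q + t : ℝ) : Circ))
    (K : Subgroup (Equiv.Perm Circ)) (hK : K = Hgrp s m q α τs E ⊓ Delta q)
    (x : ℝ) (hx0 : 0 ≤ x) (hxq : x < 1 / q) :
    (∀ f : Equiv.Perm Circ, f ∈ K →
      ∃! ω : Equiv.Perm (Fin q), ∀ i : Fin q,
        f ((x + ((i : ℕ) : ℝ) / q : ℝ) : Circ) = ((x + ((ω i : ℕ) : ℝ) / q : ℝ) : Circ)) ∧
    (∀ ωx : ↥K → Equiv.Perm (Fin q),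
      (∀ (f : ↥K) (i : Fin q),
        (f : Equiv.Perm Circ) ((x + ((i : ℕ) : ℝ) / q : ℝ) : Circ)
          = ((x + ((ωx f i : ℕ) : ℝ) / q : ℝ) : Circ)) →
      (∀ f g : ↥K, ωx (f * g) = ωx f * ωx g) ∧
      (∀ τ ∈ SQgrp m q τs, ∀ (hmem : E τ ∈ K), ωx ⟨E τ, hmem⟩ = τ)) := by
  have : NeZero q := ⟨by omega⟩
  have hKΔ : K ≤ Delta q := hK ▸ inf_le_right
  have hE_fiber (τ : Perm (Fin q)) : IsFiberPerm q x (E τ) τ := fun i => by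
    simpa only [fiberPt, add_comm x] using hE τ i x hx0 hxq
  refine ⟨fun f hf => ?_, fun ωx hωx => ⟨fun f g => ?_, fun τ _ hmem => ?_⟩⟩
  · obtain ⟨ω, hω⟩ := exists_isFiberPerm_of_mem_delta x (hKΔ hf)
    exact ⟨ω, hω, fun ω' hω' => IsFiberPerm.unique hω' hω⟩
  · exact IsFiberPerm.unique (hωx (f * g)) (IsFiberPerm.mul (hωx f) (hωx g))
  · exact IsFiberPerm.unique (hωx _) (hE_fiber τ)

theorem stmt_6
    (s m q : ℕ) (hs : 1 ≤ s) (hm : 1 ≤ m) (hq : 2 ≤ q)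
    (α : Fin s → ℝ) (hα : LinearIndependent ℚ (Fin.cons (1 : ℝ) α))
    (τs : Fin m → Equiv.Perm (Fin q))
    (E : Equiv.Perm (Fin q) → Equiv.Perm Circ)
    (hE : ∀ (τ : Equiv.Perm (Fin q)) (i : Fin q) (t : ℝ), 0 ≤ t → t < 1 / q →
      E τ ((((i : ℕ) : ℝ) / q + t : ℝ) : Circ) = ((((τ i : ℕ) : ℝ) / q + t : ℝ) : Circ))
    (K : Subgroup (Equiv.Perm Circ)) (hK : K = Hgrp s m q α τs E ⊓ Delta q)
    (x : ℝ) (hx0 : 0 ≤ x) (hxq : x < 1 / q) :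
    (∀ f : Equiv.Perm Circ, f ∈ K →
      ∃! ω : Equiv.Perm (Fin q), ∀ i : Fin q,
        f ((x + ((i : ℕ) : ℝ) / q : ℝ) : Circ) = ((x + ((ω i : ℕ) : ℝ) / q : ℝ) : Circ)) ∧
    (∀ ωx : ↥K → Equiv.Perm (Fin q),
      (∀ (f : ↥K) (i : Fin q),
        (f : Equiv.Perm Circ) ((x + ((i : ℕ) : ℝ) / q : ℝ) : Circ)
          = ((x + ((ωx f i : ℕ) : ℝ) / q : ℝ) : Circ)) →
      (∀ f g : ↥K, ωx (f * g) = ωx f * ωx g) ∧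
      (∀ τ ∈ SQgrp m q τs, ∀ (hmem : E τ ∈ K), ωx ⟨E τ, hmem⟩ = τ)) :=
  stmt_6_general s m q hq α τs E hE K hK x hx0 hxq
end
end

section
/- Assume q ≥ 5 and that K is infinite. If for every x ∈ [0,1/q) the image ω_x(K) contains the alternating group A_q, then K has no solvable subgroup of finite index (K is not virtually solvable). -/
open Equiv

noncomputable section

/-!
If `S ≤ K` had finite index and were solvable, its normal core would be a solvable normal
subgroup of `K`, nontrivial because `K` is infinite, and the last nontrivial term `B` of its
derived series would be a nontrivial abelian normal subgroup of `K`. Pick `g ∈ B` moving a point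
`x + i/q`. Its image `ω_x(B)` is an abelian subgroup of `S_q` normalised by `ω_x(K) ⊇ A_q`; for
`q ≥ 5` such a subgroup is trivial, because `A_q` is simple, non-abelian and has trivial
centraliser in `S_q`. So `ω_x(g) = 1`, contradicting `g (x + i/q) ≠ x + i/q`.
-/

open Subgroup

namespace Subgroup

variable {G : Type*} [Group G]

theorem map_subtype_derivedSeries (N : Subgroup G) (n : ℕ) :
    (derivedSeries N n).map N.subtype = (fun H : Subgroup G => ⁅H, H⁆)^[n] N := by
  induction n with
  | zero => rw [derivedSeries_zero, ← MonoidHom.range_eq_map, range_subtype]; rfl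
  | succ n ih => rw [derivedSeries_succ, map_commutator, ih, Function.iterate_succ_apply']

theorem exists_normal_ne_bot_commutator_eq_bot_of_iterate_eq_bot (n : ℕ) (N : Subgroup G)
    [N.Normal] (hN : N ≠ ⊥) (hn : (fun H : Subgroup G => ⁅H, H⁆)^[n] N = ⊥) :
    ∃ B : Subgroup G, B.Normal ∧ B ≠ ⊥ ∧ ⁅B, B⁆ = ⊥ := by
  induction n generalizing N with
  | zero => exact absurd hn hN
  | succ n ih =>
    by_cases hNN : ⁅N, N⁆ = ⊥
    · exact ⟨N, inferInstance, hN, hNN⟩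
    · exact ih ⁅N, N⁆ hNN hn

theorem exists_normal_ne_bot_commutator_eq_bot (N : Subgroup G) [N.Normal] [Group.IsSolvable N]
    (hN : N ≠ ⊥) : ∃ B : Subgroup G, B.Normal ∧ B ≠ ⊥ ∧ ⁅B, B⁆ = ⊥ := by
  obtain ⟨n, hn⟩ := (Group.isSolvable_def N).mp ‹_›
  refine exists_normal_ne_bot_commutator_eq_bot_of_iterate_eq_bot n N hN ?_
  rw [← map_subtype_derivedSeries, hn, map_bot]

theorem exists_normal_ne_bot_commutator_eq_bot_of_finiteIndex [Infinite G] (S : Subgroup G)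
    [S.FiniteIndex] [Group.IsSolvable S] : ∃ B : Subgroup G, B.Normal ∧ B ≠ ⊥ ∧ ⁅B, B⁆ = ⊥ := by
  have : Group.IsSolvable S.normalCore :=
    Group.isSolvable_of_isSolvable_injective (inclusion_injective S.normalCore_le)
  refine exists_normal_ne_bot_commutator_eq_bot S.normalCore fun h => ?_
  have := S.normalCore.index_ne_zero_of_finite
  rw [h, index_bot, Nat.card_eq_zero_of_infinite] at this
  exact this rfl

end Subgroup

namespace Equiv.Perm

variable {α : Type*} [Fintype α] [DecidableEq α]

theorem alternatingGroup_not_le_centralizer (h4 : 4 ≤ Nat.card α) :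
    ¬ alternatingGroup α ≤ centralizer (alternatingGroup α) := by
  intro hA
  have := alternatingGroup.nontrivial_of_three_le_card (α := α) (by omega)
  obtain ⟨σ, hσ⟩ := exists_ne (1 : alternatingGroup α)
  refine hσ ((Subgroup.mem_bot).mp ?_)
  rw [← alternatingGroup.center_eq_bot h4, mem_center_iff]
  exact fun τ => Subtype.ext (hA σ.2 τ τ.2)

theorem centralizer_alternatingGroup_eq_bot (h5 : 5 ≤ Nat.card α) :
    centralizer (alternatingGroup α : Set (Perm α)) = ⊥ := by
  by_contra hC
  exact alternatingGroup_not_le_centralizer (by omega)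
    (alternatingGroup_le_of_normal h5 ((nontrivial_iff_ne_bot _).mpr hC))

theorem eq_bot_of_commutator_eq_bot_of_alternatingGroup_le_normalizer (h5 : 5 ≤ Nat.card α)
    {M : Subgroup (Perm α)} (hM : ⁅M, M⁆ = ⊥) (hAM : alternatingGroup α ≤ normalizer M) :
    M = ⊥ := by
  have hMA : M ⊓ alternatingGroup α = ⊥ := by
    have := alternatingGroup.isSimpleGroup h5
    have : (M.subgroupOf (alternatingGroup α)).Normal :=
      normal_subgroupOf_iff_le_normalizer_inf.mpr
        ((le_inf hAM le_normalizer).trans inf_normalizer_le_normalizer_inf)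
    refine this.eq_bot_or_eq_top.elim (fun hbot => (subgroupOf_eq_bot.mp hbot).eq_bot)
      fun htop => absurd ?_ (alternatingGroup_not_le_centralizer (α := α) (by omega))
    calc alternatingGroup α ≤ M := subgroupOf_eq_top.mp htop
      _ ≤ centralizer M := commutator_eq_bot_iff_le_centralizer.mp hM
      _ ≤ centralizer (alternatingGroup α) := centralizer_le (subgroupOf_eq_top.mp htop)
  have hAM : ⁅alternatingGroup α, M⁆ = ⊥ := by
    refine le_bot_iff.mp (hMA ▸ le_inf ?_ (commutator_le_left _ _))
    rw [commutator_le]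
    intro σ hσ g hg
    rw [commutatorElement_def]
    exact mul_mem (((mem_normalizer_iff).mp (hAM hσ) g).mp hg) (inv_mem hg)
  rw [← le_bot_iff, ← centralizer_alternatingGroup_eq_bot h5, le_centralizer_iff]
  exact commutator_eq_bot_iff_le_centralizer.mp hAM

end Equiv.Perm

theorem coe_intCast_eq_zero (n : ℤ) : ((n : ℝ) : Circ) = 0 :=
  (AddCircle.coe_eq_zero_iff 1).mpr ⟨n, by simp⟩

theorem exists_monoidHom_perm_of_injective {G X ι : Type*} [Group G] [Finite ι]
    (ρ : G →* Perm X) {p : ι → X} (hp : Function.Injective p)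
    (hρ : ∀ g i, ∃ j, ρ g (p i) = p j) : ∃ ω : G →* Perm ι, ∀ g i, ρ g (p i) = p (ω g i) := by
  choose φ hφ using hρ
  have hφ_inj (g : G) : Function.Injective (φ g) := fun i j hij =>
    hp ((ρ g).injective (by rw [hφ, hφ, hij]))
  refine ⟨{ toFun g := Equiv.ofBijective (φ g) (Finite.injective_iff_bijective.mp (hφ_inj g))
            map_one' := ?_
            map_mul' g h := ?_ }, hφ⟩
  · ext i
    apply hp
    change p (φ 1 i) = p i
    rw [← hφ, map_one, Perm.one_apply]
  · ext i
    apply hp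
    change p (φ (g * h) i) = p (φ g (φ h i))
    rw [← hφ, ← hφ, ← hφ, map_mul, Perm.mul_apply]

theorem injective_coe_add_div {q : ℕ} {x : ℝ} (hx0 : 0 ≤ x) (hx1 : x < 1 / q) :
    Function.Injective fun i : Fin q => ((x + (i : ℕ) / q : ℝ) : Circ) := by
  intro i j hij
  have hq : (0 : ℝ) < q := by exact_mod_cast i.pos
  have mem (k : Fin q) : x + (k : ℕ) / q ∈ Set.Ico (0 : ℝ) (0 + 1) := by
    have hk : ((k : ℕ) : ℝ) + 1 ≤ q := by exact_mod_cast k.2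
    have hxq : x * q < 1 := (lt_div_iff₀ hq).mp hx1
    refine ⟨by positivity, ?_⟩
    rw [zero_add, show x + (k : ℕ) / q = (x * q + k) / q by field_simp, div_lt_one hq]
    linarith
  have h := (AddCircle.coe_eq_coe_iff_of_mem_Ico (mem i) (mem j)).mp hij
  rw [add_right_inj, div_left_inj' hq.ne', Nat.cast_inj] at h
  exact Fin.ext h

theorem exists_coe_add_div_eq {q : ℕ} (hq : 0 < q) (y : Circ) :
    ∃ x : ℝ, 0 ≤ x ∧ x < 1 / q ∧ ∃ i : Fin q, ((x + (i : ℕ) / q : ℝ) : Circ) = y := by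
  obtain ⟨r, rfl⟩ := QuotientAddGroup.mk_surjective y
  have hqR : (0 : ℝ) < q := by exact_mod_cast hq
  set t := Int.fract r with ht_def
  have ht : (t : Circ) = (r : Circ) := by
    rw [ht_def, ← Int.self_sub_floor, AddCircle.coe_sub, coe_intCast_eq_zero, sub_zero]
  have hi : ⌊t * q⌋₊ < q := (Nat.floor_lt (by positivity)).mpr
    (by nlinarith [Int.fract_lt_one r])
  refine ⟨t - ⌊t * q⌋₊ / q, ?_, ?_, ⟨⌊t * q⌋₊, hi⟩, ?_⟩
  · rw [sub_nonneg, div_le_iff₀ hqR]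
    exact Nat.floor_le (by positivity)
  · rw [sub_lt_iff_lt_add, ← add_div, lt_div_iff₀ hqR]
    linarith [Nat.lt_floor_add_one (t * q)]
  · rw [sub_add_cancel]
    exact ht

theorem exists_apply_coe_add_div_eq_of_mem_delta {q : ℕ} {f : Perm Circ} (hf : f ∈ Delta q)
    (x : ℝ) (i : Fin q) :
    ∃ j : Fin q, f ((x + (i : ℕ) / q : ℝ) : Circ) = ((x + (j : ℕ) / q : ℝ) : Circ) := by
  have hq : (0 : ℤ) < q := by exact_mod_cast i.pos
  obtain ⟨n, hn⟩ := AddSubgroup.mem_zmultiples_iff.mp (hf ((x + (i : ℕ) / q : ℝ) : Circ))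
  set k : ℤ := i + n
  refine ⟨⟨(k % q).toNat, by have := Int.emod_lt_of_pos k hq; omega⟩, ?_⟩
  rw [← sub_add_cancel (f _) _, ← hn, ← AddCircle.coe_zsmul, ← AddCircle.coe_add]
  have hk : (k : ℝ) = q * ((k / q : ℤ) : ℝ) + (((k % q).toNat : ℕ) : ℝ) := by
    have h := Int.mul_ediv_add_emod k q
    rw [← Int.toNat_of_nonneg (Int.emod_nonneg k hq.ne')] at h
    exact_mod_cast h.symm
  have hqR : (q : ℝ) ≠ 0 := by exact_mod_cast hq.ne'
  have hreal : n • (q : ℝ)⁻¹ + (x + (i : ℕ) / q)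
      = x + (((k % q).toNat : ℕ) : ℝ) / q + ((k / q : ℤ) : ℝ) := by
    rw [zsmul_eq_mul]
    field_simp
    push_cast [k] at hk
    linarith
  rw [hreal]
  rw [AddCircle.coe_add, coe_intCast_eq_zero, add_zero]

theorem stmt_10_general
    (s m q : ℕ)
    (α : Fin s → ℝ)
    (τs : Fin m → Equiv.Perm (Fin q))
    (E : Equiv.Perm (Fin q) → Equiv.Perm Circ)
    (hq5 : 5 ≤ q)
    (K : Subgroup (Equiv.Perm Circ)) (hK : K = Hgrp s m q α τs E ⊓ Delta q)
    (hinf : Infinite ↥K)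
    (hAq : ∀ (x : ℝ), 0 ≤ x → x < 1 / q → ∀ ωx : ↥K →* Equiv.Perm (Fin q),
      (∀ (f : ↥K) (i : Fin q),
        (f : Equiv.Perm Circ) ((x + ((i : ℕ) : ℝ) / q : ℝ) : Circ)
          = ((x + ((ωx f i : ℕ) : ℝ) / q : ℝ) : Circ)) →
      alternatingGroup (Fin q) ≤ ωx.range) :
    ¬ ∃ S : Subgroup ↥K, S.FiniteIndex ∧ IsSolvable ↥S := by
  rintro ⟨S, hS, hS_solv⟩
  have : Group.IsSolvable S := hS_solv
  obtain ⟨B, hB_normal, hB_ne, hB_comm⟩ := exists_normal_ne_bot_commutator_eq_bot_of_finiteIndex S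
  obtain ⟨⟨g, hgB⟩, hg⟩ := ne_bot_iff_exists_ne_one.mp hB_ne
  obtain ⟨y, hy⟩ : ∃ y, (g : Perm Circ) y ≠ y := by
    by_contra! h
    exact hg (Subtype.ext (Subtype.ext (Equiv.ext h)))
  obtain ⟨x, hx0, hx1, i, rfl⟩ := exists_coe_add_div_eq (by omega : 0 < q) y
  have hK_delta : K ≤ Delta q := hK ▸ inf_le_right
  obtain ⟨ω, hω⟩ := exists_monoidHom_perm_of_injective K.subtype (injective_coe_add_div hx0 hx1)
    fun f i => exists_apply_coe_add_div_eq_of_mem_delta (hK_delta f.2) x i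
  have hA_le : alternatingGroup (Fin q) ≤ normalizer (B.map ω) := by
    refine (hAq x hx0 hx1 ω hω).trans ?_
    rw [MonoidHom.range_eq_map, ← normalizer_eq_top_iff.mpr hB_normal]
    exact le_normalizer_map ω
  have hωB : B.map ω = ⊥ :=
    Perm.eq_bot_of_commutator_eq_bot_of_alternatingGroup_le_normalizer (by simpa using hq5)
      (by rw [← map_commutator, hB_comm, Subgroup.map_bot]) hA_le
  have hωg : ω g = 1 := mem_bot.mp (hωB ▸ mem_map_of_mem ω hgB)
  exact hy ((hω g i).trans (by rw [hωg, Perm.one_apply]))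

theorem stmt_10
    (s m q : ℕ) (hs : 1 ≤ s) (hm : 1 ≤ m) (hq : 2 ≤ q)
    (α : Fin s → ℝ) (hα : LinearIndependent ℚ (Fin.cons (1 : ℝ) α))
    (τs : Fin m → Equiv.Perm (Fin q))
    (E : Equiv.Perm (Fin q) → Equiv.Perm Circ)
    (hE : ∀ (τ : Equiv.Perm (Fin q)) (i : Fin q) (t : ℝ), 0 ≤ t → t < 1 / q →
      E τ ((((i : ℕ) : ℝ) / q + t : ℝ) : Circ) = ((((τ i : ℕ) : ℝ) / q + t : ℝ) : Circ))
    (hq5 : 5 ≤ q)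
    (K : Subgroup (Equiv.Perm Circ)) (hK : K = Hgrp s m q α τs E ⊓ Delta q)
    (hinf : Infinite ↥K)
    (hAq : ∀ (x : ℝ), 0 ≤ x → x < 1 / q → ∀ ωx : ↥K →* Equiv.Perm (Fin q),
      (∀ (f : ↥K) (i : Fin q),
        (f : Equiv.Perm Circ) ((x + ((i : ℕ) : ℝ) / q : ℝ) : Circ)
          = ((x + ((ωx f i : ℕ) : ℝ) / q : ℝ) : Circ)) →
      alternatingGroup (Fin q) ≤ ωx.range) :
    ¬ ∃ S : Subgroup ↥K, S.FiniteIndex ∧ IsSolvable ↥S :=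
  stmt_10_general s m q α τs E hq5 K hK hinf hAq
end
end
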